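/- Let σ > 0, n, k ≥ 1, r ∈ ℝⁿ, and let E : {0,1}^k → {0,1}ⁿ be an injective encoder. For each bit index i ∈ {1,…,k}, define the network output y_i = ∑_{b ∈ {0,1}^k} b_i · q(b), where q(b) = exp(2⟨r, E(b)⟩/σ²) / ∑_{b' ∈ {0,1}^k} exp(2⟨r, E(b')⟩/σ²). (This is the i-th output of the three-layer network whose input-to-hidden weight matrix has columns E(b), whose hidden layer applies scaled softmax with scaling α = 2/σ², and whose hidden-to-output weight matrix has rows b, aligned so that row b matches column E(b).) Then y_i > 1/2 if and only if ∑_{b: b_i = 1} p(r | 2E(b) − 1) > ∑_{b: b_i = 0} p(r | 2E(b) − 1). Hence thresholding each network output at 1/2 realizes bit-wise maximum likelihood decoding, with no training required (Theorem 2). -/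

import Mathlib

open Finset

/-- The AWGN likelihood of a signal `s ∈ ℝⁿ` given received vector `r ∈ ℝⁿ`:
`p(r|s) = ∏ j, (2πσ²)^{-1/2} exp(-(rⱼ - sⱼ)²/(2σ²))`. -/
noncomputable def awgnLik (σ : ℝ) {n : ℕ} (r s : Fin n → ℝ) : ℝ :=
  ∏ j, (Real.sqrt (2 * Real.pi * σ ^ 2))⁻¹ *
    Real.exp (-(r j - s j) ^ 2 / (2 * σ ^ 2))

/-- The BPSK image of a binary word `c ∈ {0,1}ⁿ`: `sⱼ = 2cⱼ - 1`. -/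
def bpsk {n : ℕ} (c : Fin n → ℝ) : Fin n → ℝ := fun j => 2 * c j - 1

/-- The correlation `⟨r, c⟩ = ∑ⱼ rⱼ cⱼ`. -/
def corr {n : ℕ} (r c : Fin n → ℝ) : ℝ := ∑ j, r j * c j

/-- **Theorem 2.** For an injective encoder `E : {0,1}ᵏ → {0,1}ⁿ`
and softmax weights `q(b) = exp(2⟨r,E(b)⟩/σ²)/∑_{b'} exp(2⟨r,E(b')⟩/σ²)`, the
`i`-th output of the three-layer network, `yᵢ = ∑_b bᵢ · q(b)`, satisfies
`yᵢ > 1/2` iff `∑_{b : bᵢ=1} p(r | 2E(b)-1) > ∑_{b : bᵢ=0} p(r | 2E(b)-1)`.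
Hence thresholding each network output at `1/2` realizes bit-wise maximum
likelihood decoding, with no training required. -/
theorem mlnn_is_bitwise_ml
    (σ : ℝ) (hσ : 0 < σ) (n k : ℕ) (hn : 1 ≤ n) (hk : 1 ≤ k)
    (r : Fin n → ℝ)
    (E : (Fin k → Bool) → (Fin n → ℝ))
    (hEbin : ∀ b j, E b j = 0 ∨ E b j = 1)
    (hEinj : Function.Injective E)
    (q : (Fin k → Bool) → ℝ)
    (hq : ∀ b, q b = Real.exp (2 * corr r (E b) / σ ^ 2) /
      ∑ b' : Fin k → Bool, Real.exp (2 * corr r (E b') / σ ^ 2))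
    (y : Fin k → ℝ)
    (hy : ∀ i, y i = ∑ b : Fin k → Bool, (if b i then (1 : ℝ) else 0) * q b)
    (i : Fin k) :
    (1 / 2 < y i) ↔
      (∑ b ∈ Finset.univ.filter (fun b : Fin k → Bool => b i = false),
          awgnLik σ r (bpsk (E b)) <
        ∑ b ∈ Finset.univ.filter (fun b : Fin k → Bool => b i = true),
          awgnLik σ r (bpsk (E b))) := by

  classical
  have hσne : σ ≠ 0 := ne_of_gt hσ
  have hσ2 : (0:ℝ) < σ ^ 2 := by positivity
  set f : (Fin k → Bool) → ℝ := fun b => Real.exp (2 * corr r (E b) / σ ^ 2) with hfdef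
  have hfpos : ∀ b, 0 < f b := fun b => Real.exp_pos _
  set A : ℝ := ((Real.sqrt (2 * Real.pi * σ ^ 2))⁻¹) ^ n *
    Real.exp ((-∑ j, (r j)^2 - 2 * ∑ j, r j - (n:ℝ)) / (2 * σ ^ 2)) with hAdef
  have hsqrtpos : 0 < Real.sqrt (2 * Real.pi * σ ^ 2) :=
    Real.sqrt_pos.mpr (by positivity)
  have hApos : 0 < A := by positivity
  have hlik : ∀ b, awgnLik σ r (bpsk (E b)) = A * f b := by
    intro b
    have hterm : ∀ j, (-(r j - bpsk (E b) j) ^ 2 / (2 * σ ^ 2))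
        = (-(r j)^2 - 2 * r j - 1) / (2 * σ ^ 2) + 2 * (r j * E b j) / σ ^ 2 := by
      intro j
      have hsq : (E b j) ^ 2 = E b j := by rcases hEbin b j with h | h <;> simp [h]
      have key : -(r j - bpsk (E b) j) ^ 2
          = -(r j)^2 - 2 * r j - 1 + 4 * (r j * E b j) := by
        simp only [bpsk]
        linear_combination (-4 : ℝ) * hsq
      rw [key]
      field_simp
      ring
    have hsum : ∑ j, (-(r j - bpsk (E b) j) ^ 2 / (2 * σ ^ 2))
        = (-∑ j, (r j)^2 - 2 * ∑ j, r j - (n:ℝ)) / (2 * σ ^ 2)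
          + 2 * corr r (E b) / σ ^ 2 := by
      rw [Finset.sum_congr rfl fun j _ => hterm j, Finset.sum_add_distrib]
      congr 1
      · rw [← Finset.sum_div]
        congr 1
        rw [Finset.sum_sub_distrib, Finset.sum_sub_distrib]
        simp [Finset.sum_neg_distrib, Finset.mul_sum]
      · rw [corr, Finset.mul_sum, Finset.sum_div]
    rw [awgnLik, Finset.prod_mul_distrib, Finset.prod_const, ← Real.exp_sum,
      Finset.card_univ, Fintype.card_fin, hsum, Real.exp_add, hAdef]
    ring
  -- sums
  set T : ℝ := ∑ b ∈ Finset.univ.filter (fun b : Fin k → Bool => b i = true), f b with hT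
  set F : ℝ := ∑ b ∈ Finset.univ.filter (fun b : Fin k → Bool => b i = false), f b with hF
  have hS : (∑ b' : Fin k → Bool, f b') = T + F := by
    rw [hT, hF, ← Finset.sum_filter_add_sum_filter_not Finset.univ
      (fun b : Fin k → Bool => b i = true) f]
    simp [Bool.not_eq_true]
  have hTpos : 0 < T := by
    apply Finset.sum_pos (fun b _ => hfpos b)
    obtain ⟨b0, hb0⟩ : ∃ b : Fin k → Bool, b i = true := ⟨fun _ => true, rfl⟩
    exact ⟨b0, by simp [hb0]⟩
  have hFpos : 0 < F := by
    apply Finset.sum_pos (fun b _ => hfpos b)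
    exact ⟨fun _ => false, by simp⟩
  have hSpos : 0 < T + F := by linarith
  have hyi : y i = T / (T + F) := by
    rw [hy i]
    have : ∀ b : Fin k → Bool, (if b i then (1:ℝ) else 0) * q b
        = if b i = true then f b / (T + F) else 0 := by
      intro b
      rw [hq b, hS]
      by_cases h : b i <;> simp [h, hfdef]
    rw [Finset.sum_congr rfl fun b _ => this b, ← Finset.sum_filter, ← Finset.sum_div]
  have hiff1 : (1 / 2 < y i) ↔ F < T := by
    rw [hyi, div_lt_div_iff₀ (by norm_num) hSpos]
    constructor <;> intro h <;> linarith
  rw [hiff1]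
  have hLT : (∑ b ∈ Finset.univ.filter (fun b : Fin k → Bool => b i = true),
      awgnLik σ r (bpsk (E b))) = A * T := by
    rw [hT, Finset.mul_sum]
    exact Finset.sum_congr rfl fun b _ => hlik b
  have hLF : (∑ b ∈ Finset.univ.filter (fun b : Fin k → Bool => b i = false),
      awgnLik σ r (bpsk (E b))) = A * F := by
    rw [hF, Finset.mul_sum]
    exact Finset.sum_congr rfl fun b _ => hlik b
  rw [hLT, hLF, mul_lt_mul_iff_right₀ hApos]
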